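/- Let L be hyper-regular (FL a global diffeomorphism) and X = (X_1,...,X_k) a k-vector field on (T^1_k)^*Q solving the Hamiltonian equation Σ_A ι_{X_A}(ω₀)_A = dH with H = E_L ∘ FL^{-1}. Then K := X ∘ FL (i.e., K_A = X_A ∘ FL) satisfies all three conditions of a field operator; in particular the second-order condition T^1_k(τ*_Q) ∘ K = Id_{T^1_kQ} holds. -/

import Mathlib

open scoped BigOperators

noncomputable section

/-- The coordinate model of `T^1_kQ` (or `(T^1_k)^*Q`): points `(q^i, v^i_A)` (resp. `(q^i, p^A_i)`). -/
abbrev Ek (n k : ℕ) : Type := (Fin n → ℝ) × (Fin k → Fin n → ℝ)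

/-- The coordinate tangent direction `∂/∂q^i`. -/
def Qdir (n k : ℕ) (i : Fin n) : Ek n k := (Pi.single i 1, 0)

/-- The coordinate tangent direction `∂/∂v^i_A` (resp. `∂/∂p^A_i`). -/
def Vdir (n k : ℕ) (A : Fin k) (i : Fin n) : Ek n k :=
  (0, Pi.single A (Pi.single i 1))

/-- The canonical 2-form `(ω₀)_A = Σ_i dq^i ∧ dp^A_i` on `(T^1_k)^*Q`, evaluated on
two tangent vectors. -/
def omegaCan {n k : ℕ} (A : Fin k) (u w : Ek n k) : ℝ :=
  ∑ i, (u.1 i * w.2 A i - w.1 i * u.2 A i)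

/-- The partial derivative `∂L/∂v^i_A`. -/
def Lv {n k : ℕ} (L : Ek n k → ℝ) (A : Fin k) (i : Fin n) (x : Ek n k) : ℝ :=
  fderiv ℝ L x (Vdir n k A i)

/-- The partial derivative `∂L/∂q^i`. -/
def Lq {n k : ℕ} (L : Ek n k → ℝ) (i : Fin n) (x : Ek n k) : ℝ :=
  fderiv ℝ L x (Qdir n k i)

/-- The Lagrangian 2-form `(ω_L)_A = -d((∂L/∂v^i_A) dq^i) = Σ_i dq^i ∧ d(∂L/∂v^i_A)`,
evaluated at `x` on two tangent vectors. -/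
def omegaL {n k : ℕ} (L : Ek n k → ℝ) (A : Fin k) (x : Ek n k) (u w : Ek n k) : ℝ :=
  ∑ i, (u.1 i * fderiv ℝ (Lv L A i) x w - w.1 i * fderiv ℝ (Lv L A i) x u)

/-- The velocity Hessian `(∂²L/∂v^i_A ∂v^j_B)`, as an `(nk)×(nk)` matrix. -/
def Hess {n k : ℕ} (L : Ek n k → ℝ) (x : Ek n k) :
    Matrix (Fin k × Fin n) (Fin k × Fin n) ℝ :=
  fun p q => fderiv ℝ (Lv L p.1 p.2) x (Vdir n k q.1 q.2)

/-- The Legendre map `FL(q,v) = (q, ∂L/∂v)`. -/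
def FLmap {n k : ℕ} (L : Ek n k → ℝ) (x : Ek n k) : Ek n k :=
  (x.1, fun A i => Lv L A i x)

/-- The energy `E_L = Σ_{A,i} v^i_A ∂L/∂v^i_A − L = C(L) − L`. -/
def energy {n k : ℕ} (L : Ek n k → ℝ) (x : Ek n k) : ℝ :=
  (∑ A, ∑ i, x.2 A i * Lv L A i x) - L x

/-- The second partial derivative `∂²L/∂q^j ∂v^i_A` (first in `v^i_A`, then in `q^j`). -/
def D2vq {n k : ℕ} (L : Ek n k → ℝ) (A : Fin k) (i j : Fin n) (x : Ek n k) : ℝ :=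
  fderiv ℝ (Lv L A i) x (Qdir n k j)

/-- The second partial derivative `∂²L/∂v^j_B ∂v^i_A` (first in `v^i_A`, then in `v^j_B`). -/
def D2vv {n k : ℕ} (L : Ek n k → ℝ) (A : Fin k) (i : Fin n) (B : Fin k) (j : Fin n)
    (x : Ek n k) : ℝ :=
  fderiv ℝ (Lv L A i) x (Vdir n k B j)


lemma lv_smooth {n k : ℕ} {L : Ek n k → ℝ} (hL : ContDiff ℝ (⊤ : ℕ∞) L) (A : Fin k) (i : Fin n) :
    ContDiff ℝ (⊤ : ℕ∞) (Lv L A i) :=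
  (hL.fderiv_right (by simp)).clm_apply contDiff_const

def proj2 (n k : ℕ) (A : Fin k) (i : Fin n) : Ek n k →L[ℝ] ℝ :=
  (ContinuousLinearMap.proj i).comp ((ContinuousLinearMap.proj A).comp
    (ContinuousLinearMap.snd ℝ (Fin n → ℝ) (Fin k → Fin n → ℝ)))

def FLderiv {n k : ℕ} (L : Ek n k → ℝ) (x : Ek n k) : Ek n k →L[ℝ] Ek n k :=
  (ContinuousLinearMap.fst ℝ (Fin n → ℝ) (Fin k → Fin n → ℝ)).prod
    (ContinuousLinearMap.pi fun A => ContinuousLinearMap.pi fun i =>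
      fderiv ℝ (Lv L A i) x)

lemma hasFDerivAt_FL {n k : ℕ} {L : Ek n k → ℝ} (hL : ContDiff ℝ (⊤ : ℕ∞) L) (x : Ek n k) :
    HasFDerivAt (FLmap L) (FLderiv L x) x := by
  apply HasFDerivAt.prodMk hasFDerivAt_fst
  exact hasFDerivAt_pi.2 fun A => hasFDerivAt_pi.2 fun i =>
    (((lv_smooth hL A i).differentiable (by simp)) x).hasFDerivAt

lemma hasFDerivAt_energy {n k : ℕ} {L : Ek n k → ℝ} (hL : ContDiff ℝ (⊤ : ℕ∞) L) (x : Ek n k) :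
    HasFDerivAt (energy L)
      ((∑ A, ∑ i, (x.2 A i • fderiv ℝ (Lv L A i) x + Lv L A i x • proj2 n k A i))
        - fderiv ℝ L x) x := by
  apply HasFDerivAt.sub _ ((hL.differentiable (by simp)) x).hasFDerivAt
  apply HasFDerivAt.fun_sum; intro A _
  apply HasFDerivAt.fun_sum; intro i _
  exact HasFDerivAt.mul ((proj2 n k A i).hasFDerivAt)
    (((lv_smooth hL A i).differentiable (by simp)) x).hasFDerivAt

lemma vdir_decomp (n k : ℕ) (w : Fin k → Fin n → ℝ) :
    ((0 : Fin n → ℝ), w) = ∑ A, ∑ i, w A i • Vdir n k A i := by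
  rw [Prod.ext_iff]
  constructor
  · simp [Vdir, Prod.fst_sum]
  · funext C j
    simp [Vdir, Prod.snd_sum, Finset.sum_apply, ite_apply, Pi.single_apply,
      Finset.sum_ite_eq, Finset.sum_ite_eq']

lemma clm_eval {n k : ℕ} (T : Ek n k →L[ℝ] ℝ) (w : Fin k → Fin n → ℝ) :
    T ((0 : Fin n → ℝ), w) = ∑ A, ∑ i, w A i * T (Vdir n k A i) := by
  rw [vdir_decomp n k w]
  simp [map_sum, smul_eq_mul]

/-- for hyper-regular `L`, if `X` solves the Hamiltonian equation
`Σ_A ι_{X_A}(ω₀)_A = dH` with `H = E_L ∘ FL⁻¹`, then `K := X ∘ FL` satisfies the field-equation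
condition and the second-order condition of a field operator. -/
theorem hamiltonian_solution_gives_field_operator (n k : ℕ) (L : Ek n k → ℝ)
    (hL : ContDiff ℝ (⊤ : ℕ∞) L) (hbij : Function.Bijective (FLmap L))
    (hreg : ∀ x : Ek n k, (Hess L x).det ≠ 0)
    (H : Ek n k → ℝ) (hH : ContDiff ℝ (⊤ : ℕ∞) H)
    (hHL : ∀ x : Ek n k, H (FLmap L x) = energy L x)
    (X : Fin k → Ek n k → Ek n k)
    (hsol : ∀ (y : Ek n k) (u : Ek n k), ∑ A, omegaCan A (X A y) u = fderiv ℝ H y u) :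
    (∀ (x : Ek n k) (u : Ek n k),
      ∑ A, omegaCan A (X A (FLmap L x)) (fderiv ℝ (FLmap L) x u)
        = fderiv ℝ (energy L) x u) ∧
    (∀ (x : Ek n k) (A : Fin k) (i : Fin n), (X A (FLmap L x)).1 i = x.2 A i) := by
  have hEL : energy L = H ∘ FLmap L := funext fun x => (hHL x).symm
  have hchain : ∀ x : Ek n k, HasFDerivAt (energy L)
      ((fderiv ℝ H (FLmap L x)).comp (FLderiv L x)) x := by
    intro x
    rw [hEL]
    exact (((hH.differentiable (by simp)) (FLmap L x)).hasFDerivAt).comp x (hasFDerivAt_FL hL x)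
  constructor
  · intro x u
    rw [(hchain x).fderiv, (hasFDerivAt_FL hL x).fderiv]
    exact hsol (FLmap L x) (FLderiv L x u)
  · intro x B j
    -- step A : (X C y).1 j' = ∂H/∂p
    have hA : ∀ (C : Fin k) (j' : Fin n),
        (X C (FLmap L x)).1 j' = fderiv ℝ H (FLmap L x) (Vdir n k C j') := by
      intro C j'
      have h := hsol (FLmap L x) (Vdir n k C j')
      rw [← h]
      simp [omegaCan, Vdir, Pi.single_apply, Finset.sum_ite_eq, Finset.sum_ite_eq',
        mul_ite, ite_apply]
    set y := FLmap L x with hy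
    set p : Fin k → Fin n → ℝ := fun A i => fderiv ℝ H y (Vdir n k A i) with hp
    have heq := (hchain x).unique (hasFDerivAt_energy hL x)
    have key : ∀ (C : Fin k) (j' : Fin n),
        ∑ A, ∑ i, Hess L x (A, i) (C, j') * (p A i - x.2 A i) = 0 := by
      intro C j'
      have h1 := congrArg (fun T : Ek n k →L[ℝ] ℝ => T (Vdir n k C j')) heq
      simp only [ContinuousLinearMap.coe_comp', Function.comp_apply] at h1
      have hFLv : FLderiv L x (Vdir n k C j')
          = ((0 : Fin n → ℝ), fun A i => Hess L x (A, i) (C, j')) := by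
        simp [FLderiv, Vdir, Hess]
      rw [hFLv, clm_eval] at h1
      have h2 : ((∑ A, ∑ i, (x.2 A i • fderiv ℝ (Lv L A i) x + Lv L A i x • proj2 n k A i))
          - fderiv ℝ L x) (Vdir n k C j')
          = (∑ A, ∑ i, x.2 A i * Hess L x (A, i) (C, j')) := by
        simp only [ContinuousLinearMap.sub_apply, ContinuousLinearMap.sum_apply,
          ContinuousLinearMap.add_apply, ContinuousLinearMap.smul_apply, smul_eq_mul]
        have hproj : ∀ (A : Fin k) (i : Fin n), proj2 n k A i (Vdir n k C j')
            = if A = C ∧ i = j' then 1 else 0 := by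
          intro A i
          simp [proj2, Vdir, Pi.single_apply]
          by_cases h : A = C <;> by_cases h' : i = j' <;>
            simp [h, h', Pi.single_apply, eq_comm]
        have : ∀ (A : Fin k) (i : Fin n),
            x.2 A i * fderiv ℝ (Lv L A i) x (Vdir n k C j') + Lv L A i x * proj2 n k A i (Vdir n k C j')
            = x.2 A i * Hess L x (A, i) (C, j') + Lv L A i x * (if A = C ∧ i = j' then 1 else 0) := by
          intro A i; rw [hproj]; rfl
        simp only [this]
        rw [Finset.sum_congr rfl (fun A _ => Finset.sum_add_distrib)]
        rw [Finset.sum_add_distrib]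
        have h3 : ∑ A, ∑ i, Lv L A i x * (if A = C ∧ i = j' then 1 else 0) = Lv L C j' x := by
          simp [Finset.sum_ite_eq, Finset.sum_ite_eq', ite_and, mul_ite]
        rw [h3]
        have h4 : fderiv ℝ L x (Vdir n k C j') = Lv L C j' x := rfl
        rw [h4]; ring
      rw [h2] at h1
      calc ∑ A, ∑ i, Hess L x (A, i) (C, j') * (p A i - x.2 A i)
          = (∑ A, ∑ i, Hess L x (A, i) (C, j') * p A i)
            - ∑ A, ∑ i, x.2 A i * Hess L x (A, i) (C, j') := by
            rw [← Finset.sum_sub_distrib]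
            refine Finset.sum_congr rfl fun A _ => ?_
            rw [← Finset.sum_sub_distrib]
            refine Finset.sum_congr rfl fun i _ => ?_
            ring
        _ = 0 := by
            rw [← h1]
            simp [sub_eq_zero, hp, hy]
    -- matrix argument
    set d : Fin k × Fin n → ℝ := fun q => p q.1 q.2 - x.2 q.1 q.2 with hd
    set M : Matrix (Fin k × Fin n) (Fin k × Fin n) ℝ := (Hess L x).transpose with hM
    have hmv : M.mulVec d = 0 := by
      funext q
      simp only [hM, Matrix.mulVec, Matrix.transpose_apply, dotProduct,
        Pi.zero_apply]
      rw [Fintype.sum_prod_type]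
      exact key q.1 q.2
    have hdz : d = 0 := by
      have hdet : IsUnit M.det := by
        rw [hM, Matrix.det_transpose]; exact (hreg x).isUnit
      have := congrArg (M⁻¹.mulVec) hmv
      rwa [Matrix.mulVec_mulVec, Matrix.nonsing_inv_mul _ hdet, Matrix.one_mulVec,
        Matrix.mulVec_zero] at this
    have : d (B, j) = 0 := by rw [hdz]; rfl
    have : p B j = x.2 B j := by
      have := this; simp only [hd] at this; linarith
    rw [hA B j]; exact this


end
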